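/- For an injective parity-preserving extension F of f with g extra bits, and for a fixed output value y of f, all preimages x of y with parity(x) = parity(y) must receive distinct even-parity patterns in the g extra bits, and there are exactly 2^(g-1) even-parity bitvectors of length g (for g ≥ 1). Hence the number of parity-matching preimages of any single output value is at most 2^(g-1). -/

import Mathlib

/-!
Parity is additive over concatenation, and `F x` is the concatenation of `y` with the extra bits
whenever `f x = y`; so parity preservation forces the extra bits of a parity-matching preimage
to have even parity. Since `F` is injective and the first `m` bits are fixed to `y`, distinct
such preimages get distinct extra bits, which lie among the `2 ^ (g - 1)` even words.
-/

/-- Parity of a bitvector: XOR of its bits (true iff an odd number of ones). -/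
def parity {n : ℕ} (x : Fin n → Bool) : Bool :=
  (Finset.univ.filter fun i => x i = true).card % 2 == 1

lemma add_mod_two_beq_one (a b : ℕ) :
    ((a + b) % 2 == 1) = xor (a % 2 == 1) (b % 2 == 1) := by
  rcases Nat.mod_two_eq_zero_or_one a with ha | ha <;>
    rcases Nat.mod_two_eq_zero_or_one b with hb | hb <;>
    simp [Nat.add_mod, ha, hb]

lemma parity_append {m g : ℕ} (z : Fin (m + g) → Bool) :
    parity z = xor (parity fun i : Fin m => z (Fin.castAdd g i))
      (parity fun j : Fin g => z (Fin.natAdd m j)) := by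
  simp only [parity, Finset.card_filter, Fin.sum_univ_add, add_mod_two_beq_one]

lemma parity_snoc {n : ℕ} (v : Fin n → Bool) (b : Bool) :
    parity (Fin.snoc v b : Fin (n + 1) → Bool) = xor (parity v) b := by
  simp only [parity, Finset.card_filter, Fin.sum_univ_castSucc, Fin.snoc_castSucc, Fin.snoc_last,
    add_mod_two_beq_one]
  cases b <;> rfl

lemma parity_natAdd_eq_false {m g : ℕ} {z : Fin (m + g) → Bool} {y : Fin m → Bool}
    (hhead : (fun i : Fin m => z (Fin.castAdd g i)) = y) (hz : parity z = parity y) :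
    parity (fun j : Fin g => z (Fin.natAdd m j)) = false := by
  have h := parity_append z
  rw [hhead, hz] at h
  simpa using (congrArg (xor (parity y)) h).symm

/-- An even-parity word is determined by all but its last bit, which is the parity of the rest. -/
lemma card_filter_parity_eq_false (n : ℕ) :
    (Finset.univ.filter fun w : Fin (n + 1) → Bool => parity w = false).card = 2 ^ n := by
  calc _ = (Finset.univ : Finset (Fin n → Bool)).card := by
        refine Finset.card_nbij' Fin.init (fun v => Fin.snoc v (parity v)) ?_ ?_ ?_ ?_
        · simp
        · simp [parity_snoc]
        · intro w hw
          have hlast : parity (Fin.init w) = w (Fin.last n) := by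
            have h := parity_snoc (Fin.init w) (w (Fin.last n))
            simp only [Fin.snoc_init_self, (Finset.mem_filter.mp hw).2] at h
            simpa using h
          simp only [hlast, Fin.snoc_init_self]
        · exact fun v _ => Fin.init_snoc _ _
    _ = 2 ^ n := by simp

/-- For an injective parity-preserving extension F of f: parity-matching preimages of a fixed
output y receive distinct even-parity patterns in the g extra bits, there are exactly 2^(g-1)
even-parity bitvectors of length g (g ≥ 1), hence at most 2^(g-1) parity-matching preimages. -/
theorem matching_preimages_distinct_even_patterns (n m g : ℕ) (hg : 1 ≤ g)
    (f : (Fin n → Bool) → (Fin m → Bool))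
    (F : (Fin n → Bool) → (Fin (m + g) → Bool))
    (hF : Function.Injective F)
    (hagree : ∀ x, ∀ i : Fin m, F x (Fin.castAdd g i) = f x i)
    (hparity : ∀ x, parity (F x) = parity x)
    (y : Fin m → Bool) :
    (∀ x, f x = y → parity x = parity y →
        parity (fun j : Fin g => F x (Fin.natAdd m j)) = false) ∧
    (∀ x₁ x₂, f x₁ = y → f x₂ = y → parity x₁ = parity y → parity x₂ = parity y →
        (fun j : Fin g => F x₁ (Fin.natAdd m j)) = (fun j : Fin g => F x₂ (Fin.natAdd m j)) →
        x₁ = x₂) ∧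
    (Finset.univ.filter fun w : Fin g → Bool => parity w = false).card = 2 ^ (g - 1) ∧
    (Finset.univ.filter fun x => f x = y ∧ parity x = parity y).card ≤ 2 ^ (g - 1) := by
  have head_eq : ∀ x, f x = y → (fun i : Fin m => F x (Fin.castAdd g i)) = y :=
    fun x hx => funext fun i => by rw [hagree, hx]
  have tail_even : ∀ x, f x = y → parity x = parity y →
      parity (fun j : Fin g => F x (Fin.natAdd m j)) = false :=
    fun x hfx hpx => parity_natAdd_eq_false (head_eq x hfx) ((hparity x).trans hpx)
  have tail_inj : ∀ x₁ x₂, f x₁ = y → f x₂ = y → parity x₁ = parity y → parity x₂ = parity y →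
      (fun j : Fin g => F x₁ (Fin.natAdd m j)) = (fun j : Fin g => F x₂ (Fin.natAdd m j)) →
      x₁ = x₂ := by
    intro x₁ x₂ h₁ h₂ _ _ htail
    apply hF
    rw [← Fin.append_castAdd_natAdd (f := F x₁), ← Fin.append_castAdd_natAdd (f := F x₂),
      head_eq x₁ h₁, head_eq x₂ h₂, htail]
  have count :
      (Finset.univ.filter fun w : Fin g → Bool => parity w = false).card = 2 ^ (g - 1) := by
    obtain ⟨k, rfl⟩ := Nat.exists_eq_add_of_le' hg
    exact card_filter_parity_eq_false k
  refine ⟨tail_even, tail_inj, count, count ▸ Finset.card_le_card_of_injOn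
    (fun x j => F x (Fin.natAdd m j)) (fun x hx => ?_) (fun x₁ hx₁ x₂ hx₂ => ?_)⟩ <;>
    simp only [Finset.coe_filter, Finset.mem_univ, true_and, Set.mem_ofPred_eq] at *
  · exact tail_even x hx.1 hx.2
  · exact tail_inj x₁ x₂ hx₁.1 hx₂.1 hx₁.2 hx₂.2
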